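/- arXiv:2011.09451 — 2 statements merged into one kernel-verified Lean document; each statement's English description precedes it below -/
import Mathlib

section
/- Let d ≥ 2 and let 𝐪 be the tuple of all quadratic monomials ξ^α with |α| = 2 in d variables (so the tuple has n = d(d+1)/2 components). Then max over m ≥ 1 and 0 ≤ n' ≤ n of 4n' / (2m + 𝔡_{d−m,n'}(𝐪)) equals 4n / (2 + 𝔡_{d−1,n}(𝐪)) = 4n/(d+1) = 2d; in particular the maximum is attained at m = 1 and n' = n, and 𝔡_{d−1,n}(𝐪) = d − 1. -/
open MeasureTheory
open scoped ENNReal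

noncomputable section

namespace GOZZK

/-- A quadratic form in `d` real variables. -/
abbrev QF (d : ℕ) := QuadraticForm ℝ (Fin d → ℝ)

/-- `NV 𝐩`: the number of variables that some component of the tuple `𝐩` of quadratic
forms depends on (equivalently, the number of indices `j` such that `∂_{ξ_j} P ≢ 0` for some
component `P` of `𝐩`). -/
def NV {d : ℕ} {ι : Type*} (Q : ι → QF d) : ℕ :=
  Set.ncard { j : Fin d | ∃ i, ∃ ξ : Fin d → ℝ, Q i (Function.update ξ j 0) ≠ Q i ξ }

/-- `𝔡_{d',n'}(𝐪)`: the infimum of `NV (M' · (𝐪 ∘ M))` over all real `d × d` matrices `M`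
of rank `d'` and all real `n × n` matrices `M'` of rank `n'`. -/
def numvar {d : ℕ} {ι : Type*} [Fintype ι] [DecidableEq ι]
    (Q : ι → QF d) (d' n' : ℕ) : ℕ :=
  sInf { k | ∃ (M : Matrix (Fin d) (Fin d) ℝ) (M' : Matrix ι ι ℝ),
    M.rank = d' ∧ M'.rank = n' ∧
    NV (fun i => ∑ i' : ι, M' i i' • (Q i').comp (Matrix.vecMulLinear M)) = k }

/-- The quadratic form `ξ ↦ ξ_i ξ_j` in `d` variables. -/
def mono {d : ℕ} (i j : Fin d) : QF d :=
  LinearMap.BilinMap.toQuadraticMap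
    (LinearMap.mk₂ ℝ (fun ξ η : Fin d → ℝ => ξ i * η j)
      (fun x y z => by simp [add_mul])
      (fun c x y => by simp [mul_assoc])
      (fun x y z => by simp [mul_add])
      (fun c x y => by simp [smul_eq_mul]; ring))

/-- The tuple of all quadratic monomials `ξ_i ξ_j`, `i ≤ j`, in `d` variables. -/
def fullQuad (d : ℕ) : {ij : Fin d × Fin d // ij.1 ≤ ij.2} → QF d :=
  fun ij => mono ij.1.1 ij.1.2

/-! Write `tri r = r(r+1)/2`, the dimension of the space of quadratic forms in `r` variables, and
`P = M' · (𝐪 ∘ M)`. The components of `P` span the image of the row space of `M'` under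
`Ψ : c ↦ (∑ cᵢ qᵢ) ∘ M`, so their span has dimension at least `rank M' - dim ker Ψ`. Since `𝐪`
spans all quadratic forms, `Ψ` has the same image as `Q ↦ Q ∘ M`, of dimension `tri (rank M)`,
so `dim ker Ψ = n - tri (rank M)`. On the other hand the components of `P` involve only `NV P`
variables, so their span has dimension at most `tri (NV P)`. Hence
`n' + tri d' ≤ tri 𝔡_{d',n'}(𝐪) + n`, and elementary arithmetic turns this into
`4n' / (2m + 𝔡_{d-m,n'}(𝐪)) ≤ 2d`. Equality holds at `m = 1`, `n' = n`: there the inequality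
gives `𝔡_{d-1,n}(𝐪) ≥ d - 1`, and projecting away one coordinate gives `≤`. -/

open Module

abbrev MonoIdx (d : ℕ) := {ij : Fin d × Fin d // ij.1 ≤ ij.2}

def tri (r : ℕ) : ℕ := r * (r + 1) / 2

lemma two_mul_tri (r : ℕ) : 2 * tri r = r * (r + 1) :=
  Nat.mul_div_cancel' (Nat.even_mul_succ_self r).two_dvd

lemma tri_strictMono : StrictMono tri := fun a b hab => by
  have : a * (a + 1) < b * (b + 1) := Nat.mul_lt_mul'' hab (by omega)
  have := two_mul_tri a; have := two_mul_tri b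
  omega

lemma card_monoIdx (d : ℕ) : Fintype.card (MonoIdx d) = tri d := by
  rw [← Fintype.card_congr Sym2.sortEquiv, Sym2.card, Fintype.card_fin, Nat.choose_two_right,
    Nat.add_sub_cancel, Nat.mul_comm, tri]

lemma mono_apply {d : ℕ} (i j : Fin d) (ξ : Fin d → ℝ) : mono i j ξ = ξ i * ξ j := rfl

lemma polar_mono {d : ℕ} (i j : Fin d) (x y : Fin d → ℝ) :
    QuadraticMap.polar (mono i j) x y = x i * y j + y i * x j := by
  simp only [QuadraticMap.polar, mono_apply, Pi.add_apply]
  ring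

lemma polar_sum_smul {E ι : Type*} [AddCommGroup E] [Module ℝ E] (s : Finset ι) (g : ι → ℝ)
    (Q : ι → QuadraticForm ℝ E) (x y : E) :
    QuadraticMap.polar (⇑(∑ i ∈ s, g i • Q i)) x y =
      ∑ i ∈ s, g i * QuadraticMap.polar (Q i) x y := by
  simp only [QuadraticMap.polar, sum_apply, smul_apply, smul_eq_mul, ← Finset.sum_sub_distrib,
    mul_sub]

lemma linearIndependent_fullQuad (d : ℕ) : LinearIndependent ℝ (fullQuad d) := by
  classical
  rw [Fintype.linearIndependent_iff]
  rintro g hg ⟨⟨a, b⟩, hab⟩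
  have hpolar : QuadraticMap.polar (⇑(∑ ij, g ij • fullQuad d ij))
      (Pi.single a 1) (Pi.single b 1) = 0 := by
    simp [hg, QuadraticMap.polar]
  rw [polar_sum_smul, Finset.sum_eq_single ⟨(a, b), hab⟩] at hpolar
  · by_cases h : a = b
    · subst h
      simp only [fullQuad, polar_mono, Pi.single_eq_same] at hpolar
      linarith
    · simpa [fullQuad, polar_mono, h, Ne.symm h] using hpolar
  · rintro ⟨⟨i, j⟩, hij⟩ - hne
    have h1 : ¬ (i = a ∧ j = b) := fun ⟨hi, hj⟩ => hne (by simp [hi, hj])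
    have h2 : ¬ (i = b ∧ j = a) := by
      rintro ⟨rfl, rfl⟩
      exact h1 ⟨le_antisymm hij hab, le_antisymm hab hij⟩
    simp only [fullQuad, polar_mono, Pi.single_apply]
    split_ifs <;> simp_all
  · simp

/-- The coefficients of a quadratic form in the monomials `ξ_a ξ_b`, `a ≤ b`: the entries of the
triangular bilinear form `QuadraticMap.toBilin` in the standard basis. -/
def coeffs (d : ℕ) : QF d →ₗ[ℝ] MonoIdx d → ℝ :=
  LinearMap.pi fun ab => LinearMap.applyₗ (Pi.basisFun ℝ (Fin d) ab.1.2) ∘ₗ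
    LinearMap.applyₗ (Pi.basisFun ℝ (Fin d) ab.1.1) ∘ₗ
      QuadraticMap.toBilinHom ℝ (Pi.basisFun ℝ (Fin d))

lemma coeffs_injective (d : ℕ) : Function.Injective (coeffs d) := by
  rw [← LinearMap.ker_eq_bot, LinearMap.ker_eq_bot']
  intro Q hQ
  have hB : Q.toBilin (Pi.basisFun ℝ (Fin d)) = 0 := by
    refine (Pi.basisFun ℝ (Fin d)).ext fun i => (Pi.basisFun ℝ (Fin d)).ext fun j => ?_
    rcases le_or_gt i j with hij | hij
    · simpa [coeffs] using congrFun hQ ⟨(i, j), hij⟩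
    · rw [QuadraticMap.toBilin_apply, if_neg hij.ne', if_neg hij.not_gt]
      rfl
  rw [← Q.toQuadraticMap_toBilin (Pi.basisFun ℝ (Fin d)), hB]
  rfl

instance (d : ℕ) : FiniteDimensional ℝ (QF d) := Module.Finite.of_injective _ (coeffs_injective d)

lemma finrank_QF (d : ℕ) : finrank ℝ (QF d) = tri d := by
  refine le_antisymm ?_ ?_
  · simpa [card_monoIdx] using LinearMap.finrank_le_finrank_of_injective (coeffs_injective d)
  · simpa [card_monoIdx] using (linearIndependent_fullQuad d).fintype_card_le_finrank

lemma span_fullQuad (d : ℕ) : Submodule.span ℝ (Set.range (fullQuad d)) = ⊤ :=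
  (linearIndependent_fullQuad d).span_eq_top_of_card_eq_finrank' (by rw [card_monoIdx, finrank_QF])

section precomp

variable {E F : Type*} [AddCommGroup E] [Module ℝ E] [AddCommGroup F] [Module ℝ F]

def precomp (f : E →ₗ[ℝ] F) : QuadraticForm ℝ F →ₗ[ℝ] QuadraticForm ℝ E where
  toFun Q := Q.comp f
  map_add' _ _ := rfl
  map_smul' _ _ := rfl

@[simp] lemma precomp_apply (f : E →ₗ[ℝ] F) (Q : QuadraticForm ℝ F) : precomp f Q = Q.comp f := rfl

def precompEquiv (e : E ≃ₗ[ℝ] F) : QuadraticForm ℝ F ≃ₗ[ℝ] QuadraticForm ℝ E :=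
  .ofLinearMap (precomp e.toLinearMap) (precomp e.symm.toLinearMap)
    (by ext Q x; simp) (by ext Q x; simp)

lemma finrank_quadraticForm [FiniteDimensional ℝ E] :
    finrank ℝ (QuadraticForm ℝ E) = tri (finrank ℝ E) := by
  rw [← (precompEquiv (finBasis ℝ E).equivFun).finrank_eq, finrank_QF]

lemma precomp_injective {f : E →ₗ[ℝ] F} (hf : Function.Surjective f) :
    Function.Injective (precomp f) := fun Q Q' h => QuadraticMap.ext fun y => by
  obtain ⟨x, rfl⟩ := hf y
  exact congrArg (· x) h

lemma precomp_surjective {f : E →ₗ[ℝ] F} (hf : Function.Injective f) :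
    Function.Surjective (precomp f) := fun Q => by
  obtain ⟨g, hg⟩ := f.exists_leftInverse_of_injective (LinearMap.ker_eq_bot.mpr hf)
  exact ⟨Q.comp g, QuadraticMap.ext fun x => by simp [← LinearMap.comp_apply, hg]⟩

lemma finrank_range_precomp [FiniteDimensional ℝ F] (f : E →ₗ[ℝ] F) :
    finrank ℝ (LinearMap.range (precomp f)) = tri (finrank ℝ (LinearMap.range f)) := by
  have hfactor : precomp f = precomp f.rangeRestrict ∘ₗ precomp (LinearMap.range f).subtype := rfl
  rw [hfactor, LinearMap.range_comp_of_range_eq_top _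
      (LinearMap.range_eq_top.mpr (precomp_surjective (Submodule.subtype_injective _))),
    LinearMap.finrank_range_of_inj (precomp_injective f.surjective_rangeRestrict),
    finrank_quadraticForm]

end precomp

lemma finrank_le_finrank_map_add_finrank_ker {V W : Type*} [AddCommGroup V] [Module ℝ V]
    [FiniteDimensional ℝ V] [AddCommGroup W] [Module ℝ W] (Ψ : V →ₗ[ℝ] W) (p : Submodule ℝ V) :
    finrank ℝ p ≤ finrank ℝ (p.map Ψ) + finrank ℝ (LinearMap.ker Ψ) := by
  have hker : (LinearMap.ker (Ψ.domRestrict p)).map p.subtype ≤ LinearMap.ker Ψ := by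
    rintro _ ⟨x, hx, rfl⟩
    simpa using hx
  rw [← (Ψ.domRestrict p).finrank_range_add_finrank_ker, LinearMap.range_domRestrict,
    ← Submodule.finrank_map_subtype_eq]
  exact Nat.add_le_add_left (Submodule.finrank_mono hker) _

lemma finrank_range_vecMulLinear {m n : Type*} [Fintype m] [Fintype n]
    (M : Matrix m n ℝ) : finrank ℝ (LinearMap.range M.vecMulLinear) = M.rank := by
  rw [← Matrix.rank_transpose, Matrix.rank, Matrix.mulVecLin_transpose]

section coordProj

variable {σ : Type*} [Fintype σ] [DecidableEq σ]

open Classical in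
def coordProj (S : Set σ) : Matrix σ σ ℝ := Matrix.diagonal (S.indicator 1)

lemma rank_coordProj (S : Set σ) : (coordProj S).rank = S.ncard := by
  classical
  rw [coordProj, Matrix.rank_diagonal, ← Nat.card_coe_set_eq, Nat.card_eq_fintype_card]
  exact Fintype.card_congr (Equiv.subtypeEquivRight fun i => by simp)

lemma exists_rank_eq {k : ℕ} (hk : k ≤ Fintype.card σ) : ∃ M : Matrix σ σ ℝ, M.rank = k := by
  obtain ⟨t, -, ht⟩ := Finset.exists_subset_card_eq (s := Finset.univ) hk
  exact ⟨coordProj ↑t, by rw [rank_coordProj, Set.ncard_coe_finset, ht]⟩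

open Classical in
lemma vecMulLinear_coordProj (S : Set σ) (ξ : σ → ℝ) :
    (coordProj S).vecMulLinear ξ = Sᶜ.toFinset.piecewise (0 : σ → ℝ) ξ := by
  ext j
  by_cases hj : j ∈ S <;> simp [coordProj, Matrix.vecMul_diagonal, Finset.piecewise, hj]

end coordProj

lemma apply_piecewise_zero_eq {ι R α : Type*} [DecidableEq ι] [Zero R] (φ : (ι → R) → α)
    (T : Finset ι) (hT : ∀ j ∈ T, ∀ ξ, φ (Function.update ξ j 0) = φ ξ) (ξ : ι → R) :
    φ (T.piecewise 0 ξ) = φ ξ := by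
  induction T using Finset.induction_on with
  | empty => simp
  | insert j T _ ih =>
    rw [Finset.piecewise_insert, Pi.zero_apply, hT j (Finset.mem_insert_self j T),
      ih fun j hj => hT j (Finset.mem_insert_of_mem hj)]

section NV

variable {d : ℕ} {ι : Type*}

lemma comp_coordProj_eq_self {Q : QF d} {S : Set (Fin d)}
    (hQ : ∀ j ∉ S, ∀ ξ, Q (Function.update ξ j 0) = Q ξ) :
    Q.comp (coordProj S).vecMulLinear = Q := by
  classical
  ext ξ
  rw [QuadraticMap.comp_apply, vecMulLinear_coordProj]
  exact apply_piecewise_zero_eq Q _ (fun j hj => hQ j (by simpa using hj)) ξ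

lemma vecMulLinear_coordProj_update {S : Set (Fin d)} {j : Fin d} (hj : j ∉ S) (ξ : Fin d → ℝ) :
    (coordProj S).vecMulLinear (Function.update ξ j 0) = (coordProj S).vecMulLinear ξ := by
  classical
  rw [vecMulLinear_coordProj, vecMulLinear_coordProj]
  ext k
  by_cases hk : k = j
  · subst hk; simp [Finset.piecewise, hj]
  · simp [Finset.piecewise, hk]

lemma NV_comp_coordProj_le (q : ι → QF d) (S : Set (Fin d)) :
    NV (fun i => (q i).comp (coordProj S).vecMulLinear) ≤ S.ncard := by
  refine Set.ncard_le_ncard (fun j ⟨i, ξ, hne⟩ => ?_)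
  by_contra hj
  exact hne (by simp only [QuadraticMap.comp_apply, vecMulLinear_coordProj_update hj])

lemma finrank_span_le_tri_NV (P : ι → QF d) :
    finrank ℝ (Submodule.span ℝ (Set.range P)) ≤ tri (NV P) := by
  set S := {j : Fin d | ∃ i, ∃ ξ : Fin d → ℝ, P i (Function.update ξ j 0) ≠ P i ξ}
  have hP : ∀ i, precomp (coordProj S).vecMulLinear (P i) = P i := fun i =>
    comp_coordProj_eq_self fun j hj ξ => by
      by_contra hne
      exact hj ⟨i, ξ, hne⟩
  calc finrank ℝ (Submodule.span ℝ (Set.range P))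
      ≤ finrank ℝ (LinearMap.range (precomp (coordProj S).vecMulLinear)) :=
        Submodule.finrank_mono (Submodule.span_le.mpr (by rintro _ ⟨i, rfl⟩; exact ⟨P i, hP i⟩))
    _ = tri (NV P) := by rw [finrank_range_precomp, finrank_range_vecMulLinear, rank_coordProj]; rfl

end NV

section numvar

variable {d : ℕ} {ι : Type*} [Fintype ι]

theorem rank_add_tri_rank_le (q : ι → QF d) (hq : Submodule.span ℝ (Set.range q) = ⊤)
    (M : Matrix (Fin d) (Fin d) ℝ) (M' : Matrix ι ι ℝ) :
    M'.rank + tri M.rank ≤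
      tri (NV fun i => ∑ i' : ι, M' i i' • (q i').comp M.vecMulLinear) + Fintype.card ι := by
  set P := fun i => ∑ i' : ι, M' i i' • (q i').comp M.vecMulLinear
  set Ψ := precomp M.vecMulLinear ∘ₗ Fintype.linearCombination ℝ q
  have hP : P = Ψ ∘ M'.row := by
    funext i
    show _ = Ψ (M' i)
    simp only [P, Ψ, LinearMap.comp_apply, Fintype.linearCombination_apply, map_sum, map_smul,
      precomp_apply]
  have hrange : LinearMap.range Ψ = LinearMap.range (precomp M.vecMulLinear) := by
    rw [LinearMap.range_comp, Fintype.range_linearCombination, hq, Submodule.map_top]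
  have hmap := finrank_le_finrank_map_add_finrank_ker Ψ (Submodule.span ℝ (Set.range M'.row))
  rw [← Matrix.rank_eq_finrank_span_row, Submodule.map_span, ← Set.range_comp, ← hP] at hmap
  have hnullity := Ψ.finrank_range_add_finrank_ker
  rw [hrange, finrank_range_precomp, finrank_range_vecMulLinear, finrank_fintype_fun_eq_card]
    at hnullity
  have := hmap.trans (Nat.add_le_add_right (finrank_span_le_tri_NV P) _)
  omega

variable [DecidableEq ι]

lemma exists_NV_eq_numvar (q : ι → QF d) {d' n' : ℕ} (hd' : d' ≤ d) (hn' : n' ≤ Fintype.card ι) :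
    ∃ (M : Matrix (Fin d) (Fin d) ℝ) (M' : Matrix ι ι ℝ), M.rank = d' ∧ M'.rank = n' ∧
      NV (fun i => ∑ i' : ι, M' i i' • (q i').comp M.vecMulLinear) = numvar q d' n' := by
  obtain ⟨M, hM⟩ := exists_rank_eq (σ := Fin d) (by simpa using hd')
  obtain ⟨M', hM'⟩ := exists_rank_eq (σ := ι) hn'
  have hne : Set.Nonempty {k | ∃ (M : Matrix (Fin d) (Fin d) ℝ) (M' : Matrix ι ι ℝ),
      M.rank = d' ∧ M'.rank = n' ∧
      NV (fun i => ∑ i' : ι, M' i i' • (q i').comp M.vecMulLinear) = k} :=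
    ⟨_, M, M', hM, hM', rfl⟩
  exact Nat.sInf_mem hne

lemma numvar_le (q : ι → QF d) {k : ℕ} (hk : k ≤ d) : numvar q k (Fintype.card ι) ≤ k := by
  obtain ⟨t, -, ht⟩ := Finset.exists_subset_card_eq (s := (Finset.univ : Finset (Fin d)))
    (by simpa using hk)
  have hS : (↑t : Set (Fin d)).ncard = k := by rw [Set.ncard_coe_finset, ht]
  have hNV : NV (fun i => ∑ i' : ι,
      (1 : Matrix ι ι ℝ) i i' • (q i').comp (coordProj ↑t).vecMulLinear) ≤ k := by
    simpa [Matrix.one_apply, hS] using NV_comp_coordProj_le q ↑t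
  refine le_trans (Nat.sInf_le ?_) hNV
  exact ⟨coordProj ↑t, 1, by rw [rank_coordProj, hS], by simp, rfl⟩

end numvar

lemma tri_le_tri_sub_add_mul (d : ℕ) {m : ℕ} (hm : 1 ≤ m) : tri d ≤ tri (d - m) + d * m := by
  have h := two_mul_tri d
  have h' := two_mul_tri (d - m)
  rcases le_or_gt m d with hmd | hmd
  · obtain ⟨r, rfl⟩ := Nat.exists_eq_add_of_le hmd
    rw [Nat.add_sub_cancel_left] at h' ⊢
    nlinarith
  · rw [Nat.sub_eq_zero_of_le hmd.le] at h' ⊢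
    nlinarith

lemma two_mul_le_of_le_tri {d m k n : ℕ} (hm : 1 ≤ m) (hn : n ≤ tri d) (hnk : n ≤ tri k + d * m) :
    2 * n ≤ d * (2 * m + k) := by
  have hd := two_mul_tri d
  have hk := two_mul_tri k
  rcases le_or_gt d k with hdk | hdk
  · nlinarith
  · nlinarith

lemma numvar_fullQuad_spec {d d' n' : ℕ} (hd' : d' ≤ d) (hn' : n' ≤ tri d) :
    n' + tri d' ≤ tri (numvar (fullQuad d) d' n') + tri d := by
  rw [← card_monoIdx d] at hn'
  obtain ⟨M, M', hM, hM', hNV⟩ := exists_NV_eq_numvar (fullQuad d) hd' hn'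
  simpa [hM, hM', hNV, card_monoIdx] using
    rank_add_tri_rank_le (fullQuad d) (span_fullQuad d) M M'

lemma numvar_fullQuad_sub_one (d : ℕ) : numvar (fullQuad d) (d - 1) (tri d) = d - 1 := by
  refine le_antisymm ?_ ?_
  · simpa [card_monoIdx] using numvar_le (fullQuad d) (Nat.sub_le d 1)
  · have h := numvar_fullQuad_spec (Nat.sub_le d 1) le_rfl
    exact tri_strictMono.le_iff_le.mp (by omega)

lemma ratio_fullQuad_le {d m n' : ℕ} (hm : 1 ≤ m) (hn' : n' ≤ tri d) :
    4 * (n' : ℝ) / (2 * m + numvar (fullQuad d) (d - m) n') ≤ 2 * d := by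
  have hspec := numvar_fullQuad_spec (Nat.sub_le d m) hn'
  have hnat := two_mul_le_of_le_tri hm hn' (by linarith [tri_le_tri_sub_add_mul d hm])
  rw [div_le_iff₀ (by positivity)]
  have : (2 * n' : ℝ) ≤ d * (2 * m + numvar (fullQuad d) (d - m) n') := by exact_mod_cast hnat
  linarith

lemma iSup₂_eq_of_le_of_eq {ι κ : Type*} [Nonempty ι] [Finite κ] [Nonempty κ] {F : ι → κ → ℝ}
    {c : ℝ} (hle : ∀ i j, F i j ≤ c) (i : ι) (j : κ) (heq : F i j = c) :
    ⨆ i, ⨆ j, F i j = c := by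
  refine le_antisymm (ciSup_le fun i => ciSup_le (hle i)) ?_
  calc c = F i j := heq.symm
    _ ≤ ⨆ j, F i j := le_ciSup (Set.finite_range _).bddAbove j
    _ ≤ ⨆ i, ⨆ j, F i j := le_ciSup ⟨c, by rintro _ ⟨i, rfl⟩; exact ciSup_le (hle i)⟩ i

/-- Claim 2.4: for the tuple `𝐪` of all quadratic monomials in `d ≥ 2`
variables (with `n = d(d+1)/2`), `max_{m ≥ 1} max_{0 ≤ n' ≤ n} 4n'/(2m + 𝔡_{d-m,n'}(𝐪))`
equals `4n/(2 + 𝔡_{d-1,n}(𝐪)) = 4n/(d+1) = 2d`, the maximum being attained at `m = 1`,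
`n' = n`, and `𝔡_{d-1,n}(𝐪) = d - 1`. -/
theorem statement_7 (d : ℕ) (hd : 2 ≤ d) :
    (⨆ m : {m : ℕ // 1 ≤ m}, ⨆ n' : Fin (d * (d + 1) / 2 + 1),
        4 * ((n' : ℕ) : ℝ) /
          (2 * ((m : ℕ) : ℝ) + (numvar (fullQuad d) (d - (m : ℕ)) (n' : ℕ) : ℝ)))
        = 4 * ((d * (d + 1) / 2 : ℕ) : ℝ) /
            (2 + (numvar (fullQuad d) (d - 1) (d * (d + 1) / 2) : ℝ)) ∧
    4 * ((d * (d + 1) / 2 : ℕ) : ℝ) /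
        (2 + (numvar (fullQuad d) (d - 1) (d * (d + 1) / 2) : ℝ))
      = 4 * ((d * (d + 1) / 2 : ℕ) : ℝ) / ((d : ℝ) + 1) ∧
    4 * ((d * (d + 1) / 2 : ℕ) : ℝ) / ((d : ℝ) + 1) = 2 * (d : ℝ) ∧
    numvar (fullQuad d) (d - 1) (d * (d + 1) / 2) = d - 1 := by
  have hnum : numvar (fullQuad d) (d - 1) (tri d) = d - 1 := numvar_fullQuad_sub_one d
  have hden : 2 + ((d - 1 : ℕ) : ℝ) = d + 1 := by
    rw [Nat.cast_sub (by omega)]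
    ring
  have hval : 4 * (tri d : ℝ) / (d + 1) = 2 * d := by
    have h : (2 * tri d : ℝ) = d * (d + 1) := by exact_mod_cast two_mul_tri d
    field_simp
    linarith
  have hmax : 4 * (tri d : ℝ) / (2 + numvar (fullQuad d) (d - 1) (tri d)) = 2 * d := by
    rw [hnum, hden, hval]
  refine ⟨?_, hmax.trans hval.symm, hval, hnum⟩
  rw [show d * (d + 1) / 2 = tri d from rfl, hmax]
  refine iSup₂_eq_of_le_of_eq (fun m n' => ratio_fullQuad_le m.2 (Nat.lt_succ_iff.mp n'.2))
    ⟨1, le_rfl⟩ (Fin.last _) ?_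
  simpa using hmax

end GOZZK
end
end

section
/- Let 𝔽 = ℝ(ξ_1, …, ξ_d) be the field of rational functions in d variables over ℝ. Let A = (Σ_k a_{i,j,k} ξ_k)_{i,j} be an N_1 × N_2 matrix whose entries are homogeneous linear forms with real coefficients, and suppose rank_𝔽 A = r. Then there exist invertible real matrices B (N_1 × N_1) and B' (N_2 × N_2) such that BAB' has a zero block of size (N_1 − r) × (N_2 − r), i.e., BAB' = [[∗, ∗], [∗, 0]] with the 0 block in the lower-right corner of size (N_1 − r) × (N_2 − r). -/
open MeasureTheory
open scoped ENNReal

noncomputable section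

/-!
Choose a real point `c₀` at which the specialisation `A(c₀) = ∑ₖ c₀ₖ Aₖ` has maximal rank `r₀`.
Specialisation cannot increase rank (an invertible minor of `A(c₀)` lifts to a minor of `A` with
nonzero determinant), so `r₀ ≤ r`. Maximality along the lines `c₀ + t eₖ` forces, by a
Flanders-type argument, `uᵀ Aₖ v = 0` whenever `uᵀ A(c₀) = 0` and `A(c₀) v = 0`. Rows of `B` and
columns of `B'` are then bases of `ℝ^N₁`, `ℝ^N₂` whose last `N₁ - r₀`, `N₂ - r₀` vectors lie in
these two kernels.
-/

open Module Submodule Matrix Polynomial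

section

variable {K V ι m n : Type*} [Field K]

theorem exists_linearIndependent_comp_fin [AddCommGroup V] [Module K V] [Finite ι] (v : ι → V)
    {s : ℕ} (hs : finrank K (span K (Set.range v)) = s) :
    ∃ a : Fin s → ι, LinearIndependent K (v ∘ a) := by
  obtain ⟨κ, a, ha, hspan, hli⟩ := exists_linearIndependent' K v
  have : Finite κ := Finite.of_injective a ha
  have : Fintype κ := Fintype.ofFinite κ
  have hcard : Fintype.card κ = s := by
    rw [← hs, ← hspan, finrank_span_eq_card hli]
  let e := Fintype.equivFinOfCardEq hcard
  exact ⟨a ∘ e.symm, hli.comp _ e.symm.injective⟩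

theorem exists_basis_forall_le_mem [AddCommGroup V] [Module K V]
    [FiniteDimensional K V] (W : Submodule K V) {N s : ℕ} (hV : finrank K V = N)
    (hW : s + finrank K W = N) :
    ∃ b : Basis (Fin N) K V, ∀ j : Fin N, s ≤ j → b j ∈ W := by
  obtain ⟨W', hW'⟩ := W.exists_isCompl
  have hs : finrank K W' = s := by
    have := Submodule.finrank_add_eq_of_isCompl hW'
    omega
  let b₀ : Basis (Fin s ⊕ Fin (finrank K W)) K V :=
    ((Module.finBasisOfFinrankEq K W' hs).prod (Module.finBasis K W)).map
      (W'.prodEquivOfIsCompl W hW'.symm)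
  let e : Fin s ⊕ Fin (finrank K W) ≃ Fin N := finSumFinEquiv.trans (finCongr hW)
  refine ⟨b₀.reindex e, fun j hj => ?_⟩
  have hj' : j = e (Sum.inr ⟨j - s, by omega⟩) := by
    ext
    simp only [e, Equiv.trans_apply, finSumFinEquiv_apply_right, Fin.natAdd_mk, finCongr_apply,
      Fin.cast_mk]
    omega
  rw [hj', Basis.reindex_apply, Equiv.symm_apply_apply]
  simp [b₀]

variable [Fintype m] [Fintype n]

theorem Matrix.exists_isUnit_submatrix_rank (M : Matrix m n K) :
    ∃ (f : Fin M.rank → m) (g : Fin M.rank → n), IsUnit (M.submatrix f g) := by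
  classical
  obtain ⟨g, hg⟩ := exists_linearIndependent_comp_fin M.col M.rank_eq_finrank_span_cols.symm
  have hrank : (M.submatrix id g).rank = M.rank := by
    rw [← rank_transpose, LinearIndependent.rank_matrix (M := (M.submatrix id g)ᵀ) hg,
      Fintype.card_fin]
  obtain ⟨f, hf⟩ := exists_linearIndependent_comp_fin (M.submatrix id g).row
    (((M.submatrix id g).rank_eq_finrank_span_row).symm.trans hrank)
  exact ⟨f, g, linearIndependent_rows_iff_isUnit.mp hf⟩

theorem Matrix.rank_map_le_of_injective {R L : Type*} [CommRing R] [Field L] {φ : R →+* K}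
    (hφ : Function.Injective φ) (ψ : R →+* L) (A : Matrix m n R) :
    (A.map ψ).rank ≤ (A.map φ).rank := by
  classical
  obtain ⟨f, g, hfg⟩ := (A.map ψ).exists_isUnit_submatrix_rank
  have hdet : ((A.map φ).submatrix f g).det ≠ 0 := by
    rw [submatrix_map, ← RingHom.mapMatrix_apply, ← RingHom.map_det,
      (map_ne_zero_iff φ hφ)]
    intro h
    apply ((isUnit_iff_isUnit_det _).mp hfg).ne_zero
    rw [submatrix_map, ← RingHom.mapMatrix_apply, ← RingHom.map_det, h, map_zero]
  calc (A.map ψ).rank = ((A.map φ).submatrix f g).rank := by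
        rw [rank_of_det_ne_zero hdet, Fintype.card_fin]
    _ ≤ (A.map φ).rank := rank_submatrix_le _ _ _

theorem Matrix.exists_ne_zero_isUnit_add_smul [Infinite K] [DecidableEq n]
    {B : Matrix n n K} (hB : IsUnit B) (A : Matrix n n K) :
    ∃ t : K, t ≠ 0 ∧ IsUnit (B + t • A) := by
  set p : K[X] := det ((X : K[X]) • A.map C + B.map C)
  have heval : ∀ t, p.eval t = det (B + t • A) := by
    intro t
    rw [← coe_evalRingHom, RingHom.map_det, RingHom.mapMatrix_apply, add_comm]
    congr 1
    ext i j
    simp only [map_apply, add_apply, smul_apply, coe_evalRingHom, eval_add, eval_C, smul_eq_mul,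
      eval_mul, eval_X]
  have hp : p ≠ 0 := fun h => ((isUnit_iff_isUnit_det B).mp hB).ne_zero <| by
    rw [← coeff_det_X_add_C_zero A B]
    exact (congrArg (coeff · 0) h).trans (coeff_zero 0)
  obtain ⟨t, ht⟩ : ∃ t, (X * p).eval t ≠ 0 := by
    by_contra! h
    exact mul_ne_zero X_ne_zero hp (zero_of_eval_zero _ h)
  rw [eval_mul, eval_X, heval] at ht
  exact ⟨t, left_ne_zero_of_mul ht,
    (isUnit_iff_isUnit_det _).mpr (isUnit_iff_ne_zero.mpr (right_ne_zero_of_mul ht))⟩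

theorem LinearIndependent.exists_ne_zero_add_smul [Infinite K] [AddCommGroup V] [Module K V]
    [Fintype ι] [DecidableEq ι] {v : ι → V} (hv : LinearIndependent K v) (w : ι → V) :
    ∃ t : K, t ≠ 0 ∧ LinearIndependent K (v + t • w) := by
  simp only [linearIndependent_iff_injective_fintypeLinearCombination] at hv ⊢
  obtain ⟨g, hg⟩ := (Fintype.linearCombination K v).exists_leftInverse_of_injective
    (LinearMap.ker_eq_bot.mpr hv)
  obtain ⟨t, ht, hunit⟩ := exists_ne_zero_isUnit_add_smul isUnit_one
    (LinearMap.toMatrix' (g ∘ₗ Fintype.linearCombination K w))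
  refine ⟨t, ht, Function.Injective.of_comp (f := g) ?_⟩
  have hcomp : g ∘ Fintype.linearCombination K (v + t • w) =
      toLin' (1 + t • LinearMap.toMatrix' (g ∘ₗ Fintype.linearCombination K w)) := by
    ext x : 1
    have := LinearMap.congr_fun hg x
    simp only [LinearMap.comp_apply, LinearMap.id_apply, Fintype.linearCombination_apply] at this
    simp [Fintype.linearCombination_apply, Finset.sum_add_distrib, smul_comm _ t, ← Finset.smul_sum,
      this]
  rw [hcomp]
  exact mulVec_injective_iff_isUnit.mpr hunit

/-- If `uᵀ X v ≠ 0` then `X v ∉ range M`, so a basis `M pᵢ` of `range M` together with `X v` is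
independent. It stays independent after the perturbation `M pᵢ ↦ (M + t X) pᵢ` for some `t ≠ 0`,
and `X v = (M + t X) (t⁻¹ v)`, so `rank (M + t X) > rank M`. -/
theorem Matrix.dotProduct_mulVec_eq_zero_of_forall_rank_add_smul_le [Infinite K]
    {M X : Matrix m n K} (hmax : ∀ t : K, (M + t • X).rank ≤ M.rank) {u : m → K} {v : n → K}
    (hu : u ᵥ* M = 0) (hv : M *ᵥ v = 0) : u ⬝ᵥ X *ᵥ v = 0 := by
  by_contra hδ
  have hw : X *ᵥ v ∉ LinearMap.range M.mulVecLin := by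
    rintro ⟨z, hz⟩
    rw [← hz, mulVecLin_apply, dotProduct_mulVec, hu, zero_dotProduct] at hδ
    exact hδ rfl
  let β : Basis (Fin M.rank) K (LinearMap.range M.mulVecLin) := Module.finBasis K _
  choose p hp using fun i => (β i).2
  let G : Fin (M.rank + 1) → m → K := Fin.snoc (fun i => M *ᵥ p i) (X *ᵥ v)
  let D : Fin (M.rank + 1) → m → K := Fin.snoc (fun i => X *ᵥ p i) 0
  have hG : LinearIndependent K G := by
    refine linearIndependent_finSnoc.mpr ⟨?_, fun h => hw ?_⟩
    · have : (fun i => M *ᵥ p i) = (LinearMap.range M.mulVecLin).subtype ∘ β := funext hp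
      rw [this]
      exact β.linearIndependent.map' _ (LinearMap.range M.mulVecLin).ker_subtype
    · refine span_le.mpr ?_ h
      rintro _ ⟨i, rfl⟩
      exact ⟨p i, rfl⟩
  obtain ⟨t, ht, hind⟩ := hG.exists_ne_zero_add_smul D
  have hmem : ∀ j, (G + t • D) j ∈ LinearMap.range (M + t • X).mulVecLin := by
    refine Fin.lastCases ⟨t⁻¹ • v, ?_⟩ (fun i => ⟨p i, ?_⟩)
    · simp [G, D, hv, smul_smul, ht]
    · simp [G, D]
  have : M.rank + 1 ≤ (M + t • X).rank := by
    calc M.rank + 1 = finrank K (span K (Set.range (G + t • D))) := by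
          rw [finrank_span_eq_card hind, Fintype.card_fin]
      _ ≤ (M + t • X).rank := Submodule.finrank_mono (span_le.mpr (Set.range_subset_iff.mpr hmem))
  exact absurd (hmax t) (by omega)

theorem Matrix.exists_isUnit_mul_mul_apply_eq_zero [Infinite K] {N₁ N₂ : ℕ}
    (M : Matrix (Fin N₁) (Fin N₂) K) (X : ι → Matrix (Fin N₁) (Fin N₂) K)
    (hmax : ∀ k (t : K), (M + t • X k).rank ≤ M.rank) :
    ∃ (B : Matrix (Fin N₁) (Fin N₁) K) (B' : Matrix (Fin N₂) (Fin N₂) K), IsUnit B ∧ IsUnit B' ∧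
      ∀ k (i : Fin N₁) (j : Fin N₂), M.rank ≤ i → M.rank ≤ j → (B * X k * B') i j = 0 := by
  obtain ⟨b₁, hb₁⟩ := exists_basis_forall_le_mem (LinearMap.ker M.vecMulLinear)
    (Module.finrank_fin_fun K) (s := M.rank) (by
      rw [← rank_transpose, Matrix.rank, mulVecLin_transpose,
        LinearMap.finrank_range_add_finrank_ker, Module.finrank_fin_fun])
  obtain ⟨b₂, hb₂⟩ := exists_basis_forall_le_mem (LinearMap.ker M.mulVecLin)
    (Module.finrank_fin_fun K) (s := M.rank) (by
      rw [Matrix.rank, LinearMap.finrank_range_add_finrank_ker, Module.finrank_fin_fun])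
  refine ⟨.of b₁, (.of b₂)ᵀ, linearIndependent_rows_iff_isUnit.mp b₁.linearIndependent,
    (isUnit_transpose _).mpr (linearIndependent_rows_iff_isUnit.mp b₂.linearIndependent),
    fun k i j hi hj => ?_⟩
  rw [mul_apply', mul_apply_eq_vecMul, ← dotProduct_mulVec]
  exact dotProduct_mulVec_eq_zero_of_forall_rank_add_smul_le (hmax k) (hb₁ i hi) (hb₂ j hj)

end

namespace GOZZK

/-- Lemma 4.7: if `A` is a matrix of homogeneous linear forms in
`ξ₁, …, ξ_d` of rank `r` over the field `𝔽 = ℝ(ξ₁, …, ξ_d)`, then there are invertible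
real matrices `B, B'` such that `BAB'` has a zero block of size `(N₁ - r) × (N₂ - r)` in the
lower right corner. -/
theorem statement_15 (d N₁ N₂ : ℕ) (a : Fin N₁ → Fin N₂ → Fin d → ℝ) (r : ℕ)
    (A : Matrix (Fin N₁) (Fin N₂) (MvPolynomial (Fin d) ℝ))
    (hA : ∀ i j, A i j = ∑ k, MvPolynomial.C (a i j k) * MvPolynomial.X k)
    (hr : (A.map (algebraMap (MvPolynomial (Fin d) ℝ)
        (FractionRing (MvPolynomial (Fin d) ℝ)))).rank = r) :
    ∃ (B : Matrix (Fin N₁) (Fin N₁) ℝ) (B' : Matrix (Fin N₂) (Fin N₂) ℝ),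
      IsUnit B ∧ IsUnit B' ∧
      ∀ (i : Fin N₁) (j : Fin N₂), r ≤ (i : ℕ) → r ≤ (j : ℕ) →
        (B.map (algebraMap ℝ (MvPolynomial (Fin d) ℝ)) * A *
          B'.map (algebraMap ℝ (MvPolynomial (Fin d) ℝ))) i j = 0 := by
  let Aₖ : Fin d → Matrix (Fin N₁) (Fin N₂) ℝ := fun k => .of fun i j => a i j k
  have hA' : A = ∑ k, MvPolynomial.X (R := ℝ) k • (Aₖ k).map MvPolynomial.C := by
    ext i j
    simp [Aₖ, hA, Matrix.sum_apply, mul_comm]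
  let L := Fintype.linearCombination ℝ Aₖ
  have hle : ∀ c, (L c).rank ≤ r := by
    intro c
    have heval : A.map (MvPolynomial.eval c) = L c := by
      ext i j
      simp [L, Fintype.linearCombination_apply, Aₖ, hA, Matrix.sum_apply, mul_comm]
    rw [← hr, ← heval]
    exact rank_map_le_of_injective (IsFractionRing.injective _ _) _ A
  obtain ⟨c₀, hc₀⟩ : ∃ c₀, ∀ c, (L c).rank ≤ (L c₀).rank := by
    have hbdd : BddAbove (Set.range fun c => (L c).rank) := ⟨r, Set.forall_mem_range.mpr hle⟩
    obtain ⟨c₀, hc₀⟩ := Nat.sSup_mem (Set.range_nonempty _) hbdd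
    exact ⟨c₀, fun c => (le_csSup hbdd ⟨c, rfl⟩).trans_eq hc₀.symm⟩
  have hpencil : ∀ k (t : ℝ), (L c₀ + t • Aₖ k).rank ≤ (L c₀).rank := by
    intro k t
    have := hc₀ (c₀ + Pi.single k t)
    rwa [map_add, Fintype.linearCombination_apply_single] at this
  obtain ⟨B, B', hB, hB', hzero⟩ := exists_isUnit_mul_mul_apply_eq_zero (L c₀) Aₖ hpencil
  refine ⟨B, B', hB, hB', fun i j hi hj => ?_⟩
  rw [hA', Matrix.mul_sum, Matrix.sum_mul, Matrix.sum_apply]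
  refine Finset.sum_eq_zero fun k _ => ?_
  rw [Matrix.mul_smul, Matrix.smul_mul, MvPolynomial.algebraMap_eq, ← Matrix.map_mul,
    ← Matrix.map_mul, Matrix.smul_apply, map_apply,
    hzero k i j ((hle c₀).trans hi) ((hle c₀).trans hj), map_zero, smul_zero]

end GOZZK
end
end
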